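/- arXiv:2111.00705 — 3 statements merged into one kernel-verified Lean document; each statement's English description precedes it below -/
import Mathlib

section
/- For the scaled sign compressor C(x) = (‖x‖₁/d)·sign(x), the compression error satisfies ‖C(x) − x‖₂² = (1 − ‖x‖₁²/(d‖x‖₂²))‖x‖₂² for all nonzero x ∈ ℝ^d; in particular ‖C(x) − x‖₂² ≤ (1 − 1/d)‖x‖₂². -/
/-- Scaled sign compressor `C(x) = (‖x‖₁/d)·sign(x)` (with `sign 0 = 1`):
exact compression error identity for nonzero `x`, and the `(1 - 1/d)` bound. -/
theorem stmt_2 (d : ℕ) (hd : 1 ≤ d) (x : EuclideanSpace ℝ (Fin d)) (hx : x ≠ 0) :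
    ‖(show EuclideanSpace ℝ (Fin d) from WithLp.toLp 2 (fun i => ((∑ j, |x j|) / d) * (if 0 ≤ x i then (1 : ℝ) else -1)) :
        EuclideanSpace ℝ (Fin d)) - x‖ ^ 2
      = (1 - (∑ j, |x j|) ^ 2 / (d * ‖x‖ ^ 2)) * ‖x‖ ^ 2 ∧
    ‖(show EuclideanSpace ℝ (Fin d) from WithLp.toLp 2 (fun i => ((∑ j, |x j|) / d) * (if 0 ≤ x i then (1 : ℝ) else -1)) :
        EuclideanSpace ℝ (Fin d)) - x‖ ^ 2
      ≤ (1 - 1 / (d : ℝ)) * ‖x‖ ^ 2 := by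
  have hd0 : (0:ℝ) < d := by exact_mod_cast Nat.lt_of_lt_of_le Nat.zero_lt_one hd
  have hxnorm : (0:ℝ) < ‖x‖ := norm_pos_iff.mpr hx
  set s : ℝ := ∑ j, |x j| with hs
  set C : EuclideanSpace ℝ (Fin d) :=
    WithLp.toLp 2 (fun i => (s / d) * (if 0 ≤ x i then (1 : ℝ) else -1)) with hC
  have hnormsq : ‖x‖ ^ 2 = ∑ i, (x i) ^ 2 := by
    rw [EuclideanSpace.norm_eq, Real.sq_sqrt (by positivity)]
    simp [sq_abs]
  have key : ‖C - x‖ ^ 2 = ‖x‖ ^ 2 - s ^ 2 / d := by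
    have h1 : ‖C - x‖ ^ 2 = ∑ i, ((C - x) i) ^ 2 := by
      rw [EuclideanSpace.norm_eq, Real.sq_sqrt (by positivity)]
      simp [sq_abs]
    rw [h1]
    have h2 : ∀ i, ((C - x) i) ^ 2 = s^2/(d:ℝ)^2 - 2*(s/d)*|x i| + (x i)^2 := by
      intro i
      have : (C - x) i = (s / d) * (if 0 ≤ x i then (1 : ℝ) else -1) - x i := rfl
      rw [this]
      by_cases h : 0 ≤ x i
      · simp [h, abs_of_nonneg h]; ring
      · simp [h, abs_of_neg (lt_of_not_ge h)]; ring
    simp only [h2]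
    rw [Finset.sum_add_distrib, Finset.sum_sub_distrib, ← Finset.mul_sum, ← hs, hnormsq]
    simp [Finset.sum_const]
    field_simp
    ring
  have hle : ‖x‖ ^ 2 ≤ s ^ 2 := by
    rw [hnormsq]
    have h1 : ∀ i ∈ Finset.univ, (x i)^2 ≤ |x i| * s := by
      intro i _
      have h : |x i| ≤ s := Finset.single_le_sum (fun j _ => abs_nonneg (x j)) (Finset.mem_univ i)
      nlinarith [abs_nonneg (x i), sq_abs (x i)]
    calc ∑ i, (x i)^2 ≤ ∑ i, |x i| * s := Finset.sum_le_sum h1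
      _ = s * s := by rw [← Finset.sum_mul]
      _ = s ^ 2 := by ring
  constructor
  · rw [key]
    field_simp
  · rw [key]
    have h : ‖x‖ ^ 2 / (d:ℝ) ≤ s ^ 2 / (d:ℝ) := by gcongr
    have h2 : (1 - 1 / (d:ℝ)) * ‖x‖ ^ 2 = ‖x‖ ^ 2 - ‖x‖ ^ 2 / d := by ring
    linarith
end

section
/- With the auxiliary sequence z_t = x_t + (β₁/(1−β₁))(x_t − x_{t−1}) and the update x_{t+1} = x_t − α_t V̂_t^{−1/2} m_t, for t ≥ 2 one has ‖z_{t+1} − z_t‖₂ ≤ ‖α_t V̂_t^{−1/2} g̃_t‖₂ + (β₁/(1−β₁))‖x_{t−1} − x_t‖₂, provided α_{t−1} V̂_{t−1}^{−1/2} ⪰ α_t V̂_t^{−1/2} ⪰ 0 (entrywise for the diagonals). -/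
/-- Norm bound on the increments of the auxiliary sequence:
`‖z_{t+1} - z_t‖₂ ≤ ‖α_t V̂_t^{-1/2} gt_t‖₂ + (β₁/(1-β₁))‖x_{t-1} - x_t‖₂`,
provided the diagonal entries of `α_t V̂_t^{-1/2}` are nonnegative and
nonincreasing in `t`. -/
theorem stmt_11 (d : ℕ) (β₁ : ℝ) (hβ0 : 0 ≤ β₁) (hβ1 : β₁ < 1)
    (α : ℕ → ℝ) (D : ℕ → Fin d → ℝ)
    (x m gt z : ℕ → EuclideanSpace ℝ (Fin d))
    (hx01 : x 0 = x 1) (hm0 : m 0 = 0)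
    (hxrec : ∀ t, 1 ≤ t → ∀ i, x (t + 1) i = x t i - α t * D t i * m t i)
    (hmrec : ∀ t, 1 ≤ t → ∀ i, m t i = β₁ * m (t - 1) i + (1 - β₁) * gt t i)
    (hz : ∀ t, ∀ i, z t i = x t i + β₁ / (1 - β₁) * (x t i - x (t - 1) i))
    (t : ℕ) (ht : 2 ≤ t)
    (hpos : ∀ i, 0 ≤ α t * D t i)
    (hmono : ∀ i, α t * D t i ≤ α (t - 1) * D (t - 1) i) :
    ‖z (t + 1) - z t‖
      ≤ ‖(show EuclideanSpace ℝ (Fin d) from WithLp.toLp 2 (fun i => α t * D t i * gt t i) : EuclideanSpace ℝ (Fin d))‖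
        + β₁ / (1 - β₁) * ‖x (t - 1) - x t‖ := by
  have hβ : (1 : ℝ) - β₁ ≠ 0 := by linarith
  set c := β₁ / (1 - β₁) with hc
  have hc0 : 0 ≤ c := div_nonneg hβ0 (by linarith)
  have ht1 : 1 ≤ t := by omega
  have ht1' : 1 ≤ t - 1 := by omega
  have htm : t - 1 + 1 = t := by omega
  have h3 : ∀ i, x t i = x (t - 1) i - α (t - 1) * D (t - 1) i * m (t - 1) i := by
    intro i
    have := hxrec (t - 1) ht1' i
    rwa [htm] at this
  have key : ∀ i, z (t + 1) i - z t i
      = -(α t * D t i * gt t i)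
        + c * ((α (t - 1) * D (t - 1) i - α t * D t i) * m (t - 1) i) := by
    intro i
    have h1 := hxrec t ht1 i
    have h2 := hmrec t ht1 i
    have hz1 := hz (t + 1) i
    have hz2 := hz t i
    simp only [Nat.add_sub_cancel] at hz1
    rw [hz1, hz2, h1, h2, h3 i, hc]
    field_simp
    ring
  set u : EuclideanSpace ℝ (Fin d) := WithLp.toLp 2 (fun i => -(α t * D t i * gt t i)) with hu
  set v : EuclideanSpace ℝ (Fin d) :=
    WithLp.toLp 2 (fun i => c * ((α (t - 1) * D (t - 1) i - α t * D t i) * m (t - 1) i)) with hv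
  have hsplit : z (t + 1) - z t = u + v := by
    ext i
    have := key i
    simpa [u, v] using this
  rw [hsplit]
  refine le_trans (norm_add_le _ _) (add_le_add ?_ ?_)
  · have : u = -(show EuclideanSpace ℝ (Fin d) from WithLp.toLp 2 (fun i => α t * D t i * gt t i)) := by
      ext i; simp [u]
    rw [this, norm_neg]
  · have hptw : ∀ i, |v i| ≤ c * |x (t - 1) i - x t i| := by
      intro i
      have hAB : α (t - 1) * D (t - 1) i - α t * D t i ≤ α (t - 1) * D (t - 1) i := by
        have := hpos i; linarith
      have hAB0 : 0 ≤ α (t - 1) * D (t - 1) i - α t * D t i := by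
        have := hmono i; linarith
      have hw : x (t - 1) i - x t i = α (t - 1) * D (t - 1) i * m (t - 1) i := by
        rw [h3 i]; ring
      have hA0 : 0 ≤ α (t - 1) * D (t - 1) i := le_trans (hpos i) (hmono i)
      rw [hw, hv, PiLp.toLp_apply]
      have e1 : |c * ((α (t - 1) * D (t - 1) i - α t * D t i) * m (t - 1) i)|
          = c * ((α (t - 1) * D (t - 1) i - α t * D t i) * |m (t - 1) i|) := by
        rw [abs_mul, abs_mul, abs_of_nonneg hc0, abs_of_nonneg hAB0]
      have e2 : |α (t - 1) * D (t - 1) i * m (t - 1) i|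
          = α (t - 1) * D (t - 1) i * |m (t - 1) i| := by
        rw [abs_mul, abs_of_nonneg hA0]
      rw [e1, e2]
      refine mul_le_mul_of_nonneg_left ?_ hc0
      exact mul_le_mul_of_nonneg_right hAB (abs_nonneg _)
    have hnle : ‖v‖ ≤ ‖c • (x (t - 1) - x t)‖ := by
      rw [EuclideanSpace.norm_eq, EuclideanSpace.norm_eq]
      apply Real.sqrt_le_sqrt
      apply Finset.sum_le_sum
      intro i _
      have h1 := hptw i
      have h2 : |(c • (x (t - 1) - x t)) i| = c * |x (t - 1) i - x t i| := by
        simp [abs_mul, abs_of_nonneg hc0]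
      rw [← h2] at h1
      calc ‖v i‖ ^ 2 = |v i| ^ 2 := by rw [Real.norm_eq_abs]
        _ ≤ |(c • (x (t - 1) - x t)) i| ^ 2 := by
            apply pow_le_pow_left₀ (abs_nonneg _) h1
        _ = ‖(c • (x (t - 1) - x t)) i‖ ^ 2 := by rw [Real.norm_eq_abs]
    calc ‖v‖ ≤ ‖c • (x (t - 1) - x t)‖ := hnle
      _ = c * ‖x (t - 1) - x t‖ := by
          rw [norm_smul, Real.norm_of_nonneg hc0]
end

section
/- Under the contractive compressor assumption E[‖C(x) − x‖] ≤ √π‖x‖ (0 ≤ π < 1), the server-side double compression error satisfies ‖g̃_t − ĝ_t‖ ≤ √π‖ĝ_{t−1} − g̃_{t−1}‖ + √π‖ĝ_t − ĝ_{t−1}‖, where g̃_t = g̃_{t−1} + C(ĝ_t − g̃_{t−1}); consequently ‖g̃_t − ĝ_t‖ ≤ Σ_{j=1}^t (√π)^{t+1−j}‖ĝ_j − ĝ_{j−1}‖. -/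
/-- Server-side double compression error of the Markov compression sequence:
one-step recursion and its unrolled bound. -/
theorem stmt_16 (d : ℕ) (π : ℝ) (hπ0 : 0 ≤ π) (hπ1 : π < 1)
    (C : EuclideanSpace ℝ (Fin d) → EuclideanSpace ℝ (Fin d))
    (hC : ∀ y, ‖C y - y‖ ≤ Real.sqrt π * ‖y‖)
    (gh gt : ℕ → EuclideanSpace ℝ (Fin d))
    (h0 : gt 0 = gh 0)
    (hrec : ∀ t, 1 ≤ t → gt t = gt (t - 1) + C (gh t - gt (t - 1))) :
    ∀ t, 1 ≤ t →
      ‖gt t - gh t‖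
        ≤ Real.sqrt π * ‖gh (t - 1) - gt (t - 1)‖
          + Real.sqrt π * ‖gh t - gh (t - 1)‖ ∧
      ‖gt t - gh t‖
        ≤ ∑ j ∈ Finset.Icc 1 t, Real.sqrt π ^ (t + 1 - j) * ‖gh j - gh (j - 1)‖ := by
  set s := Real.sqrt π with hsdef
  have hs : 0 ≤ s := Real.sqrt_nonneg π
  have step : ∀ t, 1 ≤ t → ‖gt t - gh t‖
      ≤ s * ‖gh (t - 1) - gt (t - 1)‖ + s * ‖gh t - gh (t - 1)‖ := by
    intro t ht
    have key : gt t - gh t = C (gh t - gt (t - 1)) - (gh t - gt (t - 1)) := by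
      rw [hrec t ht]; abel
    rw [key]
    calc ‖C (gh t - gt (t - 1)) - (gh t - gt (t - 1))‖
        ≤ s * ‖gh t - gt (t - 1)‖ := hC _
      _ ≤ s * (‖gh (t - 1) - gt (t - 1)‖ + ‖gh t - gh (t - 1)‖) := by
          apply mul_le_mul_of_nonneg_left _ hs
          have h : gh t - gt (t - 1)
              = (gh (t - 1) - gt (t - 1)) + (gh t - gh (t - 1)) := by abel
          rw [h]; exact norm_add_le _ _
      _ = _ := by ring
  intro t ht
  refine ⟨step t ht, ?_⟩
  induction t with
  | zero => omega
  | succ n ih =>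
    rcases Nat.eq_zero_or_pos n with h0n | h1n
    · subst h0n
      have hstep := step 1 le_rfl
      simp only [Nat.sub_self, h0, sub_self, norm_zero, mul_zero, zero_add] at hstep
      simpa using hstep
    · have hstep := step (n + 1) (by omega)
      have hn : n + 1 - 1 = n := rfl
      rw [hn] at hstep
      have ihn := ih h1n
      calc ‖gt (n + 1) - gh (n + 1)‖
          ≤ s * ‖gh n - gt n‖ + s * ‖gh (n + 1) - gh n‖ := hstep
        _ = s * ‖gt n - gh n‖ + s * ‖gh (n + 1) - gh n‖ := by rw [norm_sub_rev]
        _ ≤ s * (∑ j ∈ Finset.Icc 1 n, s ^ (n + 1 - j) * ‖gh j - gh (j - 1)‖)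
              + s * ‖gh (n + 1) - gh n‖ := by
            gcongr
        _ = ∑ j ∈ Finset.Icc 1 (n + 1), s ^ (n + 1 + 1 - j) * ‖gh j - gh (j - 1)‖ := by
            rw [Finset.sum_Icc_succ_top (by omega : 1 ≤ n + 1), Finset.mul_sum]
            congr 1
            · apply Finset.sum_congr rfl
              intro j hj
              have hj' : j ≤ n := (Finset.mem_Icc.mp hj).2
              have : n + 1 + 1 - j = (n + 1 - j) + 1 := by omega
              rw [this, pow_succ]
              ring
            · simp [pow_succ]
end
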